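/- arXiv:1409.7409 — 2 statements merged into one kernel-verified Lean document; each statement's English description precedes it below -/
import Mathlib

section
/- For independent exponential random variables Z_1,...,Z_n with rate 1 and real numbers a_1,...,a_n, E[(∑_i a_i Z_i)^p] = p! · h_p(a_1,...,a_n), where h_p is the complete homogeneous symmetric polynomial of degree p. -/
open MeasureTheory ProbabilityTheory Finset Real

/-! By independence the joint law of `Z` is the product measure `(Exp 1)^⊗n`. Expanding
`(∑ aᵢxᵢ)^p` by the multinomial theorem and integrating monomial by monomial against a product
measure gives `∑_k (p choose k) ∏ aᵢ^{kᵢ} E[Zᵢ^{kᵢ}]`; since `E[Zᵢ^{kᵢ}] = kᵢ!` cancels the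
denominator of the multinomial coefficient, every monomial of degree `p` appears with
weight `p!`. -/

noncomputable def completeHomogeneousValue (n p : ℕ) (a : Fin n → ℝ) : ℝ :=
  ∑ k ∈ Finset.Nat.antidiagonalTuple n p, ∏ i, a i ^ k i

section ExponentialIntegrals

variable {r : ℝ}

lemma expMeasure_eq_withDensity_restrict :
    expMeasure r = (volume.restrict (Set.Ioi 0)).withDensity
      fun x ↦ ENNReal.ofReal (r * exp (-(r * x))) := by
  rw [Measure.restrict_congr_set Ioi_ae_eq_Ici, ← withDensity_indicator measurableSet_Ici]
  refine congrArg volume.withDensity (funext fun x ↦ ?_)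
  rw [show gammaPDF 1 r x = exponentialPDF r x from rfl, exponentialPDF_eq, Set.indicator_apply]
  simp only [Set.mem_Ici]
  split_ifs <;> simp

lemma integral_expMeasure (hr : 0 ≤ r) (g : ℝ → ℝ) :
    ∫ x, g x ∂expMeasure r = ∫ x in Set.Ioi 0, r * exp (-(r * x)) * g x := by
  rw [expMeasure_eq_withDensity_restrict, integral_withDensity_eq_integral_toReal_smul
    (by fun_prop) (ae_of_all _ fun _ ↦ ENNReal.ofReal_lt_top)]
  simp_rw [ENNReal.toReal_ofReal (by positivity : 0 ≤ r * exp _), smul_eq_mul]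

lemma integrable_expMeasure_iff (hr : 0 ≤ r) {g : ℝ → ℝ} :
    Integrable g (expMeasure r) ↔
      IntegrableOn (fun x ↦ r * exp (-(r * x)) * g x) (Set.Ioi 0) := by
  rw [expMeasure_eq_withDensity_restrict, integrable_withDensity_iff_integrable_smul'
    (by fun_prop) (ae_of_all _ fun _ ↦ ENNReal.ofReal_lt_top)]
  simp_rw [ENNReal.toReal_ofReal (by positivity : 0 ≤ r * exp _), smul_eq_mul]
  rfl

lemma integrableOn_mul_exp_neg_mul_mul_pow (hr : 0 < r) (k : ℕ) :
    IntegrableOn (fun x ↦ r * exp (-(r * x)) * x ^ k) (Set.Ioi 0) := by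
  have h := (integrableOn_rpow_mul_exp_neg_mul_rpow (s := k) (p := 1)
    (by linarith [k.cast_nonneg (α := ℝ)]) one_pos hr).const_mul r
  refine IntegrableOn.congr_fun h (fun x _ ↦ ?_) measurableSet_Ioi
  simp only [rpow_one, rpow_natCast, neg_mul]
  ring

lemma integral_mul_exp_neg_mul_mul_pow (hr : 0 < r) (k : ℕ) :
    ∫ x in Set.Ioi 0, r * exp (-(r * x)) * x ^ k = k.factorial / r ^ k := by
  have hGamma := integral_rpow_mul_exp_neg_mul_Ioi (a := k + 1) (by positivity) hr
  rw [add_sub_cancel_right, Gamma_nat_eq_factorial] at hGamma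
  simp_rw [rpow_natCast] at hGamma
  calc ∫ x in Set.Ioi 0, r * exp (-(r * x)) * x ^ k
      = r * ∫ x in Set.Ioi 0, x ^ k * exp (-(r * x)) := by
        rw [← integral_const_mul]; congr 1; ext x; ring
    _ = k.factorial / r ^ k := by
        rw [hGamma, ← Nat.cast_succ, rpow_natCast, one_div, inv_pow, pow_succ]
        field_simp

lemma integrable_pow_expMeasure (hr : 0 < r) (k : ℕ) :
    Integrable (fun x ↦ x ^ k) (expMeasure r) :=
  (integrable_expMeasure_iff hr.le).2 (integrableOn_mul_exp_neg_mul_mul_pow hr k)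

lemma integral_pow_expMeasure (hr : 0 < r) (k : ℕ) :
    ∫ x, x ^ k ∂expMeasure r = k.factorial / r ^ k := by
  rw [integral_expMeasure hr.le, integral_mul_exp_neg_mul_mul_pow hr]

end ExponentialIntegrals

theorem integral_sum_mul_pow_pi {ι : Type*} [Fintype ι] [DecidableEq ι]
    {ν : ι → Measure ℝ} [∀ i, SigmaFinite (ν i)]
    (hν : ∀ i k, Integrable (fun x ↦ x ^ k) (ν i)) (a : ι → ℝ) (p : ℕ) :
    ∫ x, (∑ i, a i * x i) ^ p ∂Measure.pi ν =
      ∑ k ∈ univ.piAntidiag p,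
        (Nat.multinomial univ k : ℝ) * ∏ i, (a i ^ k i * ∫ x, x ^ k i ∂ν i) := by
  simp_rw [sum_pow_eq_sum_piAntidiag, mul_pow]
  rw [integral_finsetSum _ fun k _ ↦
    ((Integrable.fintype_prod fun i ↦ (hν i (k i)).const_mul (a i ^ k i))).const_mul _]
  refine sum_congr rfl fun k _ ↦ ?_
  rw [integral_const_mul, integral_fintype_prod_eq_prod (fun i y ↦ a i ^ k i * y ^ k i)]
  simp_rw [integral_const_mul]

lemma factorial_mul_completeHomogeneousValue (n p : ℕ) (a : Fin n → ℝ) :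
    (p.factorial : ℝ) * completeHomogeneousValue n p a =
      ∑ k ∈ univ.piAntidiag p,
        (Nat.multinomial univ k : ℝ) * ∏ i, (a i ^ k i * (k i).factorial) := by
  rw [completeHomogeneousValue, ← piAntidiag_univ_fin_eq_antidiagonalTuple, mul_sum]
  refine sum_congr rfl fun k hk ↦ ?_
  have hspec := Nat.multinomial_spec univ k
  rw [(mem_piAntidiag.1 hk).1] at hspec
  rw [prod_mul_distrib, ← hspec]
  push_cast
  ring

theorem moment_weighted_sum_exponential_general
    {Ω : Type*} [MeasurableSpace Ω] (μ : Measure Ω)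
    (n p : ℕ) (Z : Fin n → Ω → ℝ)
    (hindep : iIndepFun Z μ)
    (hexp : ∀ i, Measure.map (Z i) μ = expMeasure 1)
    (a : Fin n → ℝ) :
    ∫ ω, (∑ i, a i * Z i ω) ^ p ∂μ
      = (p.factorial : ℝ) * completeHomogeneousValue n p a := by
  have := isProbabilityMeasure_expMeasure one_pos
  have hZ : ∀ i, AEMeasurable (Z i) μ := fun i ↦
    .of_map_ne_zero (by rw [hexp i]; exact IsProbabilityMeasure.ne_zero _)
  have hlaw : μ.map (fun ω i ↦ Z i ω) = Measure.pi fun _ ↦ expMeasure 1 := by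
    rw [hindep.map_fun_eq_pi_map hZ]
    simp_rw [hexp]
  calc ∫ ω, (∑ i, a i * Z i ω) ^ p ∂μ
      = ∫ x, (∑ i, a i * x i) ^ p ∂μ.map (fun ω i ↦ Z i ω) :=
        (integral_map (f := fun x : Fin n → ℝ ↦ (∑ i, a i * x i) ^ p)
          (aemeasurable_pi_lambda _ hZ) (Continuous.aestronglyMeasurable (by fun_prop))).symm
    _ = ∑ k ∈ univ.piAntidiag p,
          (Nat.multinomial univ k : ℝ) * ∏ i, (a i ^ k i * (k i).factorial) := by
        rw [hlaw, integral_sum_mul_pow_pi (fun _ ↦ integrable_pow_expMeasure one_pos)]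
        simp_rw [integral_pow_expMeasure one_pos, one_pow, div_one]
    _ = (p.factorial : ℝ) * completeHomogeneousValue n p a :=
        (factorial_mul_completeHomogeneousValue n p a).symm

/-- For independent rate-one exponential random variables `Z₁,…,Zₙ` and reals
`a₁,…,aₙ`, `E[(∑ aᵢZᵢ)^p] = p! · h_p(a)`. -/
theorem moment_weighted_sum_exponential
    {Ω : Type*} [MeasurableSpace Ω] (μ : Measure Ω) [IsProbabilityMeasure μ]
    (n p : ℕ) (Z : Fin n → Ω → ℝ) (hmeas : ∀ i, Measurable (Z i))
    (hindep : iIndepFun Z μ)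
    (hexp : ∀ i, Measure.map (Z i) μ = expMeasure 1)
    (a : Fin n → ℝ) :
    ∫ ω, (∑ i, a i * Z i ω) ^ p ∂μ
      = (p.factorial : ℝ) * completeHomogeneousValue n p a :=
  moment_weighted_sum_exponential_general μ n p Z hindep hexp a
end

section
/- Let Ω ⊂ R² be a bounded measurable set with area A(Ω) and polar moments I_{2p}(Ω) = ∫_Ω |x|^{2p}dx, whose isometry group admits tight p-frames (so I_{2p}(T(Ω)) = |det T| F_p(s²(T)) I_{2p}(Ω)). Then for any invertible linear T: A(T(Ω))^{1+p}/I_{2p}(T(Ω)) = A(T^{-1}(Ω))^{1+p}/I_{2p}(T^{-1}(Ω)). -/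
/-!
A linear change of variables gives `A(TΩ) = |det T| A(Ω)`, and, since each `U ∈ G` preserves
`Ω` and Lebesgue measure, averaging the integrand over `G` gives
`I_{2p}(TΩ) = |det T| F_p(T) I_{2p}(Ω)`. Both ratios then agree as soon as
`F_p(T) = (det T)^{2p} F_p(T⁻¹)`. To see this, apply the frame identity on the unit disc, which
every orthogonal map preserves: `F_p(S)` is a fixed positive multiple of the disc moment
`∫_{|x| ≤ 1} |S x|^{2p} dx`. That moment is unchanged under `S ↦ Q S Q'` for orthogonal `Q, Q'`,
hence, by polar decomposition, under transposition; and in dimension two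
`(det T) T⁻¹ = adj T = J Tᵀ Jᵀ` with `J` the rotation by a right angle.
-/

open Matrix MeasureTheory

lemma integrableOn_of_continuous_of_isBounded {X E : Type*} [MetricSpace X] [ProperSpace X]
    [MeasurableSpace X] [OpensMeasurableSpace X] [NormedAddCommGroup E] {μ : Measure X}
    [IsFiniteMeasureOnCompacts μ] {g : X → E} (hg : Continuous g) {s : Set X}
    (hs : Bornology.IsBounded s) : IntegrableOn g s μ :=
  (hg.continuousOn.integrableOn_compact hs.isCompact_closure).mono_set subset_closure

lemma mul_pow_div_eq_inv_mul_pow_div {b a m : ℝ} (hb : b ≠ 0) (p : ℕ) :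
    (b * a) ^ (1 + p) / (b * ((b ^ 2) ^ p * m)) = (b⁻¹ * a) ^ (1 + p) / (b⁻¹ * m) := by
  rcases eq_or_ne m 0 with rfl | hm
  · simp
  rw [mul_pow, mul_pow, inv_pow]
  field_simp
  ring

section

variable {n : Type*} [Fintype n]

lemma volume_image_mulVec [DecidableEq n] (A : Matrix n n ℝ) (s : Set (n → ℝ)) :
    volume (A.mulVec '' s) = ENNReal.ofReal |A.det| * volume s := by
  rw [← LinearMap.det_toLin', ← Measure.addHaar_image_linearMap]
  rfl

lemma setIntegral_image_mulVec [DecidableEq n] {A : Matrix n n ℝ} (hA : IsUnit A.det)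
    {s : Set (n → ℝ)} (hs : MeasurableSet s) (g : (n → ℝ) → ℝ) :
    ∫ x in A.mulVec '' s, g x = |A.det| * ∫ x in s, g (A *ᵥ x) := by
  have hinj : Function.Injective A.mulVec :=
    mulVec_injective_iff_isUnit.mpr ((isUnit_iff_isUnit_det A).mpr hA)
  let L := LinearMap.toContinuousLinearMap (Matrix.toLin' A)
  rw [integral_image_eq_integral_abs_det_fderiv_smul volume hs (f := A.mulVec) (f' := fun _ => L)
    (fun x _ => L.hasFDerivAt.hasFDerivWithinAt) hinj.injOn g]
  simp [L, integral_const_mul]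

lemma abs_det_of_mul_transpose_eq_one [DecidableEq n] {A : Matrix n n ℝ} (hA : A * Aᵀ = 1) :
    |A.det| = 1 := by
  have h := congrArg det hA
  rw [det_mul, det_transpose, det_one, ← sq, ← sq_abs] at h
  exact (pow_eq_one_iff_of_nonneg (abs_nonneg _) two_ne_zero).mp h

lemma sum_sq_mulVec_of_mul_transpose_eq_one [DecidableEq n] {A : Matrix n n ℝ}
    (hA : A * Aᵀ = 1) (x : n → ℝ) : ∑ i, (A *ᵥ x) i ^ 2 = ∑ i, x i ^ 2 := by
  have hsq (v : n → ℝ) : ∑ i, v i ^ 2 = v ⬝ᵥ v := by simp only [dotProduct, sq]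
  rw [hsq, hsq, dotProduct_mulVec, ← mulVec_transpose, mulVec_mulVec, mul_eq_one_comm.mp hA,
    one_mulVec]

lemma setIntegral_comp_mulVec_of_mul_transpose_eq_one [DecidableEq n] {A : Matrix n n ℝ}
    (hA : A * Aᵀ = 1) {s : Set (n → ℝ)} (hs : MeasurableSet s) (hAs : A.mulVec '' s = s)
    (g : (n → ℝ) → ℝ) : ∫ x in s, g (A *ᵥ x) = ∫ x in s, g x := by
  have hdet := abs_det_of_mul_transpose_eq_one hA
  have hunit : IsUnit A.det := isUnit_iff_ne_zero.mpr fun h => by simp [h] at hdet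
  conv_rhs => rw [← hAs, setIntegral_image_mulVec hunit hs, hdet, one_mul]

lemma exists_eq_orthogonal_mul_symmetric [DecidableEq n] {T : Matrix n n ℝ}
    (hT : IsUnit T.det) : ∃ Q P : Matrix n n ℝ, Q * Qᵀ = 1 ∧ Pᵀ = P ∧ T = Q * P := by
  have hTT : (Tᵀ * T).PosSemidef := by
    simpa only [conjTranspose_eq_transpose_of_trivial] using posSemidef_conjTranspose_mul_self T
  open scoped MatrixOrder in
  obtain ⟨P, hPsa, -, hPP : P * P = Tᵀ * T⟩ :=
    CFC.exists_sqrt_of_isSelfAdjoint_of_quasispectrumRestricts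
      hTT.isHermitian (QuasispectrumRestricts.nnreal_of_nonneg hTT.nonneg)
  have hPt : Pᵀ = P := by rw [← conjTranspose_eq_transpose_of_trivial]; exact hPsa.star_eq
  have hP : IsUnit P.det := isUnit_of_mul_isUnit_left (y := P.det) <| by
    rw [← det_mul, hPP, det_mul, det_transpose]
    exact hT.mul hT
  have hTt : IsUnit Tᵀ.det := by rwa [det_transpose]
  refine ⟨T * P⁻¹, P, ?_, hPt, by rw [Matrix.mul_assoc, nonsing_inv_mul P hP, Matrix.mul_one]⟩
  calc T * P⁻¹ * (T * P⁻¹)ᵀ = T * (P * P)⁻¹ * Tᵀ := by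
        rw [transpose_mul, transpose_nonsing_inv, hPt, Matrix.mul_inv_rev, Matrix.mul_assoc,
          Matrix.mul_assoc, Matrix.mul_assoc]
    _ = (T * T⁻¹) * (Tᵀ⁻¹ * Tᵀ) := by
        rw [hPP, Matrix.mul_inv_rev, Matrix.mul_assoc, Matrix.mul_assoc, Matrix.mul_assoc]
    _ = 1 := by rw [mul_nonsing_inv T hT, nonsing_inv_mul Tᵀ hTt, Matrix.one_mul]

lemma setIntegral_sum_sq_pow_pos [Nonempty n] (p : ℕ) {s : Set (n → ℝ)}
    (hs : Bornology.IsBounded s) (hvol : volume s ≠ 0) : 0 < ∫ x in s, (∑ i, x i ^ 2) ^ p := by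
  rw [setIntegral_pos_iff_support_of_nonneg_ae (.of_forall fun x => by positivity)
    (integrableOn_of_continuous_of_isBounded (by fun_prop) hs)]
  have hsupp : s \ {0} ⊆ Function.support (fun x : n → ℝ => (∑ i, x i ^ 2) ^ p) ∩ s := by
    rintro x ⟨hxs, hx0 : x ≠ 0⟩
    obtain ⟨i, hi⟩ := Function.ne_iff.mp hx0
    have hxi : 0 < x i ^ 2 := pow_pos (abs_pos.mpr hi) 2 |>.trans_eq (sq_abs _)
    exact ⟨pow_ne_zero _ (Finset.sum_pos' (fun j _ => sq_nonneg (x j))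
      ⟨i, Finset.mem_univ i, hxi⟩).ne', hxs⟩
  calc 0 < volume s := pos_iff_ne_zero.mpr hvol
    _ = volume (s \ {0}) := (measure_sdiff_null (measure_singleton 0)).symm
    _ ≤ _ := measure_mono hsupp

lemma setIntegral_sum_sq_mulVec_pow_eq_of_average [DecidableEq n] (p : ℕ)
    {G : Finset (Matrix n n ℝ)} (hGne : G.Nonempty) (horth : ∀ U ∈ G, U * Uᵀ = 1)
    {s : Set (n → ℝ)} (hs : MeasurableSet s) (hsb : Bornology.IsBounded s)
    (hGs : ∀ U ∈ G, U.mulVec '' s = s) {S : Matrix n n ℝ} {c : ℝ}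
    (hS : ∀ x, 1 / (G.card : ℝ) * ∑ U ∈ G, (∑ i, (S *ᵥ (U *ᵥ x)) i ^ 2) ^ p
      = c * (∑ i, x i ^ 2) ^ p) :
    ∫ x in s, (∑ i, (S *ᵥ x) i ^ 2) ^ p = c * ∫ x in s, (∑ i, x i ^ 2) ^ p := by
  have hcard : (G.card : ℝ) ≠ 0 := Nat.cast_ne_zero.mpr hGne.card_pos.ne'
  calc ∫ x in s, (∑ i, (S *ᵥ x) i ^ 2) ^ p
      = 1 / (G.card : ℝ) * ∑ U ∈ G, ∫ x in s, (∑ i, (S *ᵥ (U *ᵥ x)) i ^ 2) ^ p := by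
        rw [Finset.sum_congr rfl fun U hU => setIntegral_comp_mulVec_of_mul_transpose_eq_one
          (horth U hU) hs (hGs U hU) fun y => (∑ i, (S *ᵥ y) i ^ 2) ^ p,
          Finset.sum_const, nsmul_eq_mul, ← mul_assoc, one_div_mul_cancel hcard, one_mul]
    _ = ∫ x in s, 1 / (G.card : ℝ) * ∑ U ∈ G, (∑ i, (S *ᵥ (U *ᵥ x)) i ^ 2) ^ p := by
        rw [integral_const_mul, integral_finsetSum]
        exact fun U _ => integrableOn_of_continuous_of_isBounded (by fun_prop) hsb
    _ = c * ∫ x in s, (∑ i, x i ^ 2) ^ p := by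
        simp_rw [hS]
        exact integral_const_mul _ _

def euclideanUnitBall (n : Type*) [Fintype n] : Set (n → ℝ) := {x | ∑ i, x i ^ 2 ≤ 1}

lemma measurableSet_euclideanUnitBall : MeasurableSet (euclideanUnitBall n) :=
  measurableSet_le (by fun_prop) measurable_const

lemma isBounded_euclideanUnitBall : Bornology.IsBounded (euclideanUnitBall n) := by
  refine (Metric.isBounded_closedBall (x := (0 : n → ℝ)) (r := 1)).subset fun x hx => ?_
  rw [Metric.mem_closedBall, dist_zero_right, pi_norm_le_iff_of_nonneg zero_le_one]
  intro i
  rw [Real.norm_eq_abs, ← sq_le_one_iff_abs_le_one]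
  exact (Finset.single_le_sum (fun j _ => sq_nonneg (x j)) (Finset.mem_univ i)).trans hx

lemma volume_euclideanUnitBall_pos : 0 < volume (euclideanUnitBall n) := by
  have hopen : IsOpen {x : n → ℝ | ∑ i, x i ^ 2 < 1} := isOpen_lt (by fun_prop) continuous_const
  exact (hopen.measure_pos volume ⟨0, by simp⟩).trans_le
    (measure_mono fun x hx => (le_of_lt hx : ∑ i, x i ^ 2 ≤ 1))

lemma image_mulVec_euclideanUnitBall [DecidableEq n] {A : Matrix n n ℝ} (hA : A * Aᵀ = 1) :
    A.mulVec '' euclideanUnitBall n = euclideanUnitBall n := by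
  have hAt : Aᵀ * Aᵀᵀ = 1 := by rw [transpose_transpose, mul_eq_one_comm.mp hA]
  ext y
  refine ⟨?_, fun hy => ⟨Aᵀ *ᵥ y, ?_, ?_⟩⟩
  · rintro ⟨x, hx, rfl⟩
    exact (sum_sq_mulVec_of_mul_transpose_eq_one hA x).trans_le hx
  · exact (sum_sq_mulVec_of_mul_transpose_eq_one hAt y).trans_le hy
  · rw [mulVec_mulVec, hA, one_mulVec]

noncomputable def ballMoment (p : ℕ) (S : Matrix n n ℝ) : ℝ :=
  ∫ x in euclideanUnitBall n, (∑ i, (S *ᵥ x) i ^ 2) ^ p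

lemma ballMoment_orthogonal_mul [DecidableEq n] (p : ℕ) {Q : Matrix n n ℝ} (hQ : Q * Qᵀ = 1)
    (S : Matrix n n ℝ) : ballMoment p (Q * S) = ballMoment p S := by
  simp only [ballMoment, ← mulVec_mulVec, sum_sq_mulVec_of_mul_transpose_eq_one hQ]

lemma ballMoment_mul_orthogonal [DecidableEq n] (p : ℕ) {Q : Matrix n n ℝ} (hQ : Q * Qᵀ = 1)
    (S : Matrix n n ℝ) : ballMoment p (S * Q) = ballMoment p S := by
  simp only [ballMoment, ← mulVec_mulVec]
  exact setIntegral_comp_mulVec_of_mul_transpose_eq_one hQ measurableSet_euclideanUnitBall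
    (image_mulVec_euclideanUnitBall hQ) fun y => (∑ i, (S *ᵥ y) i ^ 2) ^ p

lemma ballMoment_smul (p : ℕ) (c : ℝ) (S : Matrix n n ℝ) :
    ballMoment p (c • S) = (c ^ 2) ^ p * ballMoment p S := by
  simp only [ballMoment, smul_mulVec, Pi.smul_apply, smul_eq_mul, mul_pow, ← Finset.mul_sum,
    integral_const_mul]

lemma ballMoment_transpose [DecidableEq n] (p : ℕ) {S : Matrix n n ℝ} (hS : IsUnit S.det) :
    ballMoment p Sᵀ = ballMoment p S := by
  obtain ⟨Q, P, hQ, hP, rfl⟩ := exists_eq_orthogonal_mul_symmetric hS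
  have hQt : Qᵀ * Qᵀᵀ = 1 := by rw [transpose_transpose, mul_eq_one_comm.mp hQ]
  rw [transpose_mul, hP, ballMoment_mul_orthogonal p hQt, ballMoment_orthogonal_mul p hQ]

end

lemma adjugate_fin_two_eq_mul_transpose_mul {R : Type*} [CommRing R]
    (A : Matrix (Fin 2) (Fin 2) R) : A.adjugate = !![0, 1; -1, 0] * Aᵀ * !![0, 1; -1, 0]ᵀ := by
  ext i j
  fin_cases i <;> fin_cases j <;>
    simp [adjugate_fin_two, mul_apply, vecMul, dotProduct, Fin.sum_univ_two]

lemma ballMoment_adjugate_fin_two (p : ℕ) {T : Matrix (Fin 2) (Fin 2) ℝ} (hT : IsUnit T.det) :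
    ballMoment p T.adjugate = ballMoment p T := by
  have hJ : !![0, 1; -1, 0] * !![0, 1; -1, 0]ᵀ = (1 : Matrix (Fin 2) (Fin 2) ℝ) := by
    ext i j
    fin_cases i <;> fin_cases j <;> simp [mul_apply, Fin.sum_univ_two]
  have hJt : !![0, 1; -1, 0]ᵀ * !![0, 1; -1, 0]ᵀᵀ = (1 : Matrix (Fin 2) (Fin 2) ℝ) := by
    rw [transpose_transpose, mul_eq_one_comm.mp hJ]
  rw [adjugate_fin_two_eq_mul_transpose_mul, ballMoment_mul_orthogonal p hJt,
    ballMoment_orthogonal_mul p hJ, ballMoment_transpose p hT]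

lemma det_sq_pow_mul_ballMoment_inv_fin_two (p : ℕ) {T : Matrix (Fin 2) (Fin 2) ℝ}
    (hT : IsUnit T.det) : (T.det ^ 2) ^ p * ballMoment p T⁻¹ = ballMoment p T := by
  rw [← ballMoment_smul, inv_def, smul_smul, Ring.inverse_eq_inv', mul_inv_cancel₀ hT.ne_zero,
    one_smul, ballMoment_adjugate_fin_two p hT]

lemma det_sq_pow_mul_apply_inv_of_frame_fin_two (p : ℕ) {G : Finset (Matrix (Fin 2) (Fin 2) ℝ)}
    (hGne : G.Nonempty) (horth : ∀ U ∈ G, U * Uᵀ = 1) {Fp : Matrix (Fin 2) (Fin 2) ℝ → ℝ}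
    (hframe : ∀ (S : Matrix (Fin 2) (Fin 2) ℝ) (x : Fin 2 → ℝ),
      1 / (G.card : ℝ) * ∑ U ∈ G, (∑ i, (S *ᵥ (U *ᵥ x)) i ^ 2) ^ p = Fp S * (∑ i, x i ^ 2) ^ p)
    {T : Matrix (Fin 2) (Fin 2) ℝ} (hT : IsUnit T.det) : (T.det ^ 2) ^ p * Fp T⁻¹ = Fp T := by
  have hball (S : Matrix (Fin 2) (Fin 2) ℝ) :
      ballMoment p S = Fp S * ∫ x in euclideanUnitBall (Fin 2), (∑ i, x i ^ 2) ^ p :=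
    setIntegral_sum_sq_mulVec_pow_eq_of_average p hGne horth measurableSet_euclideanUnitBall
      isBounded_euclideanUnitBall (fun U hU => image_mulVec_euclideanUnitBall (horth U hU))
      (hframe S)
  have hpos := setIntegral_sum_sq_pow_pos p isBounded_euclideanUnitBall
    (volume_euclideanUnitBall_pos (n := Fin 2)).ne'
  refine mul_right_cancel₀ hpos.ne' ?_
  rw [mul_assoc, ← hball, ← hball, det_sq_pow_mul_ballMoment_inv_fin_two p hT]

theorem moment_ratio_two_dim_general (p : ℕ)
    (Ω : Set (Fin 2 → ℝ)) (hbd : Bornology.IsBounded Ω) (hΩ : MeasurableSet Ω)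
    (G : Finset (Matrix (Fin 2) (Fin 2) ℝ)) (hGne : G.Nonempty)
    (horth : ∀ U ∈ G, U * Uᵀ = 1)
    (hinv : ∀ U ∈ G, U.mulVec '' Ω = Ω)
    (Fp : Matrix (Fin 2) (Fin 2) ℝ → ℝ)
    (hframe : ∀ (S : Matrix (Fin 2) (Fin 2) ℝ) (x : Fin 2 → ℝ),
      (1 / (G.card : ℝ)) * ∑ U ∈ G, (∑ i, (S.mulVec (U.mulVec x) i) ^ 2) ^ p
        = Fp S * (∑ i, x i ^ 2) ^ p)
    (T : Matrix (Fin 2) (Fin 2) ℝ) (hT : IsUnit T.det) :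
    (volume (T.mulVec '' Ω)).toReal ^ (1 + p)
        / ∫ x in T.mulVec '' Ω, (∑ i, x i ^ 2) ^ p
      = (volume (T⁻¹.mulVec '' Ω)).toReal ^ (1 + p)
        / ∫ x in T⁻¹.mulVec '' Ω, (∑ i, x i ^ 2) ^ p := by
  have hvolume (S : Matrix (Fin 2) (Fin 2) ℝ) :
      (volume (S.mulVec '' Ω)).toReal = |S.det| * (volume Ω).toReal := by
    rw [volume_image_mulVec, ENNReal.toReal_mul, ENNReal.toReal_ofReal (abs_nonneg _)]
  have hmoment (S : Matrix (Fin 2) (Fin 2) ℝ) (hS : IsUnit S.det) :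
      ∫ x in S.mulVec '' Ω, (∑ i, x i ^ 2) ^ p
        = |S.det| * (Fp S * ∫ x in Ω, (∑ i, x i ^ 2) ^ p) := by
    rw [setIntegral_image_mulVec hS hΩ,
      setIntegral_sum_sq_mulVec_pow_eq_of_average p hGne horth hΩ hbd hinv (hframe S)]
  rw [hvolume, hvolume, hmoment T hT, hmoment T⁻¹ (isUnit_nonsing_inv_det T hT),
    ← det_sq_pow_mul_apply_inv_of_frame_fin_two p hGne horth hframe hT, det_nonsing_inv,
    Ring.inverse_eq_inv', abs_inv, ← sq_abs, mul_assoc]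
  exact mul_pow_div_eq_inv_mul_pow_div (abs_ne_zero.mpr hT.ne_zero) p

/-- For a bounded measurable plane set `Ω ⊂ ℝ²` whose (finite, orthogonal)
isometry group admits tight `p`-frames, the scale-invariant ratio
`A^{1+p}/I_{2p}` takes the same value on `T(Ω)` and on `T⁻¹(Ω)` for every
invertible linear `T`. -/
theorem moment_ratio_two_dim (p : ℕ)
    (Ω : Set (Fin 2 → ℝ)) (hbd : Bornology.IsBounded Ω) (hΩ : MeasurableSet Ω)
    (G : Finset (Matrix (Fin 2) (Fin 2) ℝ)) (hGne : G.Nonempty)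
    (horth : ∀ U ∈ G, U * Uᵀ = 1)
    (hmul : ∀ U ∈ G, ∀ V ∈ G, U * V ∈ G)
    (hinv : ∀ U ∈ G, U.mulVec '' Ω = Ω)
    (Fp : Matrix (Fin 2) (Fin 2) ℝ → ℝ)
    (hframe : ∀ (S : Matrix (Fin 2) (Fin 2) ℝ) (x : Fin 2 → ℝ),
      (1 / (G.card : ℝ)) * ∑ U ∈ G, (∑ i, (S.mulVec (U.mulVec x) i) ^ 2) ^ p
        = Fp S * (∑ i, x i ^ 2) ^ p)
    (T : Matrix (Fin 2) (Fin 2) ℝ) (hT : IsUnit T.det) :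
    (volume (T.mulVec '' Ω)).toReal ^ (1 + p)
        / ∫ x in T.mulVec '' Ω, (∑ i, x i ^ 2) ^ p
      = (volume (T⁻¹.mulVec '' Ω)).toReal ^ (1 + p)
        / ∫ x in T⁻¹.mulVec '' Ω, (∑ i, x i ^ 2) ^ p :=
  moment_ratio_two_dim_general p Ω hbd hΩ G hGne horth hinv Fp hframe T hT
end
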